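/- arXiv:1202.2387 — 2 statements merged into one kernel-verified Lean document; each statement's English description precedes it below -/
import Mathlib

section
/- For σ=1, fix constants 0<a<1 and b>0 with a²+b²=1, and c>0. Define K₀(v,u) = (C/u)·exp(−((u−av)/b)²/2 + u²/2) and dμ(u)=u e^{−u²/2} du on (0,∞). Then the kernel K̃(v,u)=K₀(v,u)·1_{(cv,∞)}(u) has finite Hilbert–Schmidt norm: ∫_0^∞∫_0^∞ K̃(v,u)² dμ(v) dμ(u) < ∞. -/
open MeasureTheory

/-- With `σ = 1`, `0 < a < 1`, `b > 0`, `a² + b² = 1`, `c > 0`, `C > 0`, the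
kernel `K̃(v,u) = (C/u) exp(−((u−av)/b)²/2 + u²/2) · 1_{(cv,∞)}(u)` has finite
Hilbert–Schmidt norm with respect to the Maxwell–Boltzmann measure
`dμ(u) = u e^{−u²/2} du` on `(0,∞)`:
`∫∫ K̃(v,u)² dμ(v) dμ(u) < ∞`. -/
theorem stmt9 (a b c C : ℝ) (ha0 : 0 < a) (ha1 : a < 1) (hb : 0 < b)
    (hab : a ^ 2 + b ^ 2 = 1) (hc : 0 < c) (hC : 0 < C) :
    IntegrableOn
      (fun p : ℝ × ℝ =>
        (if c * p.1 < p.2 then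
            (C / p.2) * Real.exp (-((p.2 - a * p.1) / b) ^ 2 / 2 + p.2 ^ 2 / 2)
          else 0) ^ 2
        * (p.1 * Real.exp (-p.1 ^ 2 / 2)) * (p.2 * Real.exp (-p.2 ^ 2 / 2)))
      (Set.Ioi (0 : ℝ) ×ˢ Set.Ioi (0 : ℝ)) := by
  have h1a : (0:ℝ) < 1 - a := by linarith
  set ε : ℝ := (1 - a)^2 / (2 * b^2) with hεdef
  have hε : (0:ℝ) < ε := by positivity
  have hs : MeasurableSet (Set.Ioi (0:ℝ) ×ˢ Set.Ioi (0:ℝ)) :=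
    measurableSet_Ioi.prod measurableSet_Ioi
  have hg : IntegrableOn
      (fun p : ℝ × ℝ => (C^2/c) * (Real.exp (-ε * p.1^2) * Real.exp (-ε * p.2^2)))
      (Set.Ioi (0:ℝ) ×ˢ Set.Ioi (0:ℝ)) := by
    apply Integrable.integrableOn
    apply Integrable.const_mul
    rw [Measure.volume_eq_prod]
    exact (integrable_exp_neg_mul_sq hε).mul_prod (integrable_exp_neg_mul_sq hε)
  refine hg.mono' ?_ ?_
  · apply Measurable.aestronglyMeasurable
    apply Measurable.mul
    apply Measurable.mul
    · apply Measurable.pow _ measurable_const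
      refine Measurable.ite (measurableSet_lt (measurable_fst.const_mul c) measurable_snd)
        ?_ measurable_const
      exact (measurable_const.div measurable_snd).mul
        ((((measurable_snd.sub (measurable_fst.const_mul a)).div_const b).pow_const 2).neg.div_const 2
          |>.add ((measurable_snd.pow_const 2).div_const 2)).exp
    · exact (measurable_fst.mul ((measurable_fst.pow_const 2).neg.div_const 2).exp)
    · exact (measurable_snd.mul ((measurable_snd.pow_const 2).neg.div_const 2).exp)
  · filter_upwards [self_mem_ae_restrict hs] with p hp
    obtain ⟨hv, hu⟩ := hp
    simp only [Set.mem_Ioi] at hv hu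
    set v := p.1 with hvdef
    set u := p.2 with hudef
    by_cases h : c * v < u
    · rw [if_pos h]
      have hu0 : u ≠ 0 := ne_of_gt hu
      have hb2 : (0:ℝ) < b^2 := by positivity
      have key2 : (1-a)^2*(v^2+u^2) + b^2*(u^2-v^2) ≤ 2*(u-a*v)^2 := by
        nlinarith [mul_nonneg ha0.le (sq_nonneg (u - v))]
      have key : ε*(v^2+u^2) + (u^2 - v^2)/2 ≤ ((u - a*v)/b)^2 := by
        rw [hεdef, div_pow, le_div_iff₀ hb2]
        have h2 : ((1 - a) ^ 2 / (2 * b ^ 2) * (v ^ 2 + u ^ 2) + (u ^ 2 - v ^ 2) / 2) * b ^ 2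
            = ((1-a)^2*(v^2+u^2) + b^2*(u^2-v^2))/2 := by
          field_simp
        rw [h2]; linarith
      set A : ℝ := -((u - a*v)/b)^2/2 + u^2/2 with hA
      have hexp2 : Real.exp A ^ 2 = Real.exp (2*A) := by
        rw [sq, ← Real.exp_add, ← two_mul]
      have hEeq : (C/u * Real.exp A)^2 * (v * Real.exp (-v^2/2)) * (u * Real.exp (-u^2/2))
          = C^2 * (v/u) * Real.exp (2*A + -v^2/2 + -u^2/2) := by
        rw [mul_pow, hexp2, Real.exp_add, Real.exp_add]
        field_simp
      have hnonneg : 0 ≤ (C/u * Real.exp A)^2 * (v * Real.exp (-v^2/2)) * (u * Real.exp (-u^2/2)) :=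
        mul_nonneg (mul_nonneg (sq_nonneg _) (mul_nonneg hv.le (Real.exp_pos _).le))
          (mul_nonneg hu.le (Real.exp_pos _).le)
      rw [Real.norm_eq_abs, abs_of_nonneg hnonneg, hEeq]
      have hvu : v/u ≤ 1/c := by
        rw [div_le_div_iff₀ hu hc]
        linarith
      have hS : 2*A + -v^2/2 + -u^2/2 ≤ -ε*v^2 + -ε*u^2 := by
        rw [hA]; nlinarith [key]
      calc C^2 * (v/u) * Real.exp (2*A + -v^2/2 + -u^2/2)
          ≤ C^2 * (1/c) * Real.exp (-ε*v^2 + -ε*u^2) := by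
            apply mul_le_mul
            · exact mul_le_mul_of_nonneg_left hvu (sq_nonneg C)
            · exact Real.exp_le_exp.2 hS
            · exact (Real.exp_pos _).le
            · positivity
        _ = C^2/c * (Real.exp (-ε*v^2) * Real.exp (-ε*u^2)) := by
            rw [Real.exp_add]; ring
    · rw [if_neg h]
      simp only [ne_eq, OfNat.ofNat_ne_zero, not_false_eq_true, zero_pow, zero_mul, norm_zero]
      positivity
end

section
/- Let γ∈(0,1/√3) and set a=(1−γ²)/(1+γ²), b=2γ/(1+γ²), and consider the simplified random map where Z=az+b with probability (1+γ/z)/2 and Z=az−b with probability (1−γ/z)/2 (with a approximated by 1−2γ² and b by 2γ). Then the first two conditional moments satisfy E_z[Z−z] = 2γ²(1/z − z) + O(γ³) and E_z[(Z−z)²] = 4γ² + O(γ⁴), and consequently for any C³ function φ, (E_z[φ(Z)]−φ(z))/(2γ²) → (1/z − z)φ'(z)+φ''(z) as γ→0, for each fixed z>0. -/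
open Filter Topology Asymptotics

/-!
Both moments are exact polynomials in `γ`: `E_z[Z - z] = 2γ²(1/z - z)` and
`E_z[(Z - z)²] = 4γ² + (4z² - 8)γ⁴`. Expanding `φ` to second order at `z` with a Peano remainder,
`E_z[φ(Z)] - φ(z) = φ'(z) E_z[Z - z] + φ''(z)/2 E_z[(Z - z)²] + o(γ²)`, because both possible
displacements `Z - z = ±2γ - 2γ²z` are `O(γ)`.
-/

theorem isLittleO_sub_taylor_two {E : Type*} [NormedAddCommGroup E] [NormedSpace ℝ E]
    {f : ℝ → E} {x₀ : ℝ} {B : E}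
    (hf : ∀ᶠ x in 𝓝 x₀, DifferentiableAt ℝ f x) (hf2 : HasDerivAt (deriv f) B x₀) :
    (fun x => f x - f x₀ - (x - x₀) • deriv f x₀ - ((x - x₀) ^ 2 / 2) • B)
      =o[𝓝 x₀] fun x => (x - x₀) ^ 2 := by
  obtain ⟨ε, hε, hball⟩ := Metric.eventually_nhds_iff_ball.mp hf
  have hnhds : 𝓝[Metric.ball x₀ ε] x₀ = 𝓝 x₀ :=
    nhdsWithin_eq_nhds.mpr (Metric.ball_mem_nhds x₀ hε)
  have hderiv : ∀ x ∈ Metric.ball x₀ ε, HasDerivWithinAt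
      (fun x => f x - f x₀ - (x - x₀) • deriv f x₀ - ((x - x₀) ^ 2 / 2) • B)
      (deriv f x - deriv f x₀ - (x - x₀) • B) (Metric.ball x₀ ε) x := fun x hx =>
    ((((hball x hx).hasDerivAt.sub_const (f x₀)).sub
      (((hasDerivAt_id x).sub_const x₀).smul_const (deriv f x₀))).sub
      ((((hasDerivAt_id x).sub_const x₀).pow 2).div_const 2 |>.smul_const B))
      |>.hasDerivWithinAt.congr_deriv (by simp)
  have hsmall := hasDerivAt_iff_isLittleO.mp hf2
  rw [← hnhds] at hsmall ⊢
  simpa using Convex.isLittleO_pow_succ_real (convex_ball x₀ ε) (Metric.mem_ball_self hε) hderiv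
    (by simpa using hsmall) (n := 1)

theorem Asymptotics.IsLittleO.comp_differentiableAt_sq {r d : ℝ → ℝ} {z t₀ : ℝ}
    (hr : r =o[𝓝 z] fun w => (w - z) ^ 2) (hd : DifferentiableAt ℝ d t₀) (hdz : d t₀ = z) :
    (fun t => r (d t)) =o[𝓝 t₀] fun t => (t - t₀) ^ 2 := by
  subst hdz
  exact (hr.comp_tendsto hd.continuousAt.tendsto).trans_isBigO (hd.isBigO_sub.pow 2)

/-- `stepExpect z γ g` is `E_z[g(Z)]` for the simplified map, `Z = (1 - 2γ²)z ± 2γ` with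
probabilities `(1 ± γ/z)/2`. -/
noncomputable def stepExpect (z γ : ℝ) (g : ℝ → ℝ) : ℝ :=
  (1 + γ / z) / 2 * g ((1 - 2 * γ ^ 2) * z + 2 * γ)
    + (1 - γ / z) / 2 * g ((1 - 2 * γ ^ 2) * z - 2 * γ)

section stepExpect

variable {z : ℝ}

theorem stepExpect_increment (hz : z ≠ 0) (γ : ℝ) :
    stepExpect z γ (fun w => w - z) = 2 * γ ^ 2 * (1 / z - z) := by
  simp only [stepExpect]
  field_simp
  ring

theorem stepExpect_sq_increment (hz : z ≠ 0) (γ : ℝ) :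
    stepExpect z γ (fun w => (w - z) ^ 2) = 4 * γ ^ 2 + (4 * z ^ 2 - 8) * γ ^ 4 := by
  simp only [stepExpect]
  field_simp
  ring

theorem stepExpect_sub_eq_taylor (γ : ℝ) (φ : ℝ → ℝ) (A B : ℝ) :
    stepExpect z γ φ - φ z = stepExpect z γ (fun w => w - z) * A
      + stepExpect z γ (fun w => (w - z) ^ 2) / 2 * B
      + stepExpect z γ (fun w => φ w - φ z - (w - z) * A - (w - z) ^ 2 / 2 * B) := by
  simp only [stepExpect]
  ring

theorem stepExpect_isLittleO {r : ℝ → ℝ} (hr : r =o[𝓝 z] fun w => (w - z) ^ 2) :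
    (fun γ => stepExpect z γ r) =o[𝓝 0] fun γ => γ ^ 2 := by
  have branch (s : ℝ) : (fun γ => r ((1 - 2 * γ ^ 2) * z + s * γ)) =o[𝓝 0] fun γ => γ ^ 2 := by
    simpa using hr.comp_differentiableAt_sq (t₀ := 0) (by fun_prop) (by simp)
  have weight (s : ℝ) : (fun γ : ℝ => (1 + s * γ / z) / 2) =O[𝓝 0] fun _ => (1 : ℝ) :=
    (Continuous.tendsto (by fun_prop) 0).isBigO_one ℝ
  refine (((weight 1).mul_isLittleO (branch 2)).add
    ((weight (-1)).mul_isLittleO (branch (-2)))).congr (fun γ => ?_) (fun γ => by simp)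
  simp only [stepExpect]
  ring_nf

theorem tendsto_stepExpect_sub_div (hz : z ≠ 0) {φ : ℝ → ℝ} {A B : ℝ}
    (hφ : (fun w => φ w - φ z - (w - z) * A - (w - z) ^ 2 / 2 * B)
      =o[𝓝 z] fun w => (w - z) ^ 2) :
    Tendsto (fun γ => (stepExpect z γ φ - φ z) / (2 * γ ^ 2)) (𝓝[≠] 0)
      (𝓝 ((1 / z - z) * A + B)) := by
  have hrem := (stepExpect_isLittleO hφ).tendsto_div_nhds_zero.div_const 2
  rw [zero_div] at hrem
  have hpoly : Tendsto (fun γ : ℝ => (1 / z - z) * A + (1 + (z ^ 2 - 2) * γ ^ 2) * B) (𝓝 0)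
      (𝓝 ((1 / z - z) * A + B)) := by
    simpa using (Continuous.tendsto (by fun_prop) 0 :
      Tendsto (fun γ : ℝ => (1 / z - z) * A + (1 + (z ^ 2 - 2) * γ ^ 2) * B) (𝓝 0) _)
  rw [← add_zero ((1 / z - z) * A + B)]
  refine ((hpoly.add hrem).mono_left nhdsWithin_le_nhds).congr' ?_
  filter_upwards [self_mem_nhdsWithin] with γ (hγ : γ ≠ 0)
  rw [stepExpect_sub_eq_taylor γ φ A B, stepExpect_increment hz, stepExpect_sq_increment hz]
  field_simp
  ring

end stepExpect

/-- For the simplified two-branch random map of the two-masses system,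
with `a = 1 − 2γ²`, `b = 2γ`, `Z = az + b` with probability `(1 + γ/z)/2` and
`Z = az − b` with probability `(1 − γ/z)/2`: the conditional moments satisfy
`E_z[Z−z] = 2γ²(1/z − z) + O(γ³)` and `E_z[(Z−z)²] = 4γ² + O(γ⁴)` as `γ → 0⁺`,
and for any `C³` function `φ` on `(0,∞)` and fixed `z > 0`,
`(E_z[φ(Z)] − φ(z))/(2γ²) → (1/z − z) φ'(z) + φ''(z)`. -/
theorem stmt13 (z : ℝ) (hz : 0 < z) (φ : ℝ → ℝ)
    (hφ : ∀ w ∈ Set.Ioi (0 : ℝ), ContDiffAt ℝ 3 φ w) :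
    ((fun γ : ℝ =>
        ((1 + γ / z) / 2) * ((1 - 2 * γ ^ 2) * z + 2 * γ - z)
          + ((1 - γ / z) / 2) * ((1 - 2 * γ ^ 2) * z - 2 * γ - z)
          - 2 * γ ^ 2 * (1 / z - z))
        =O[𝓝[>] (0 : ℝ)] fun γ : ℝ => γ ^ 3) ∧
    ((fun γ : ℝ =>
        ((1 + γ / z) / 2) * ((1 - 2 * γ ^ 2) * z + 2 * γ - z) ^ 2
          + ((1 - γ / z) / 2) * ((1 - 2 * γ ^ 2) * z - 2 * γ - z) ^ 2
          - 4 * γ ^ 2)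
        =O[𝓝[>] (0 : ℝ)] fun γ : ℝ => γ ^ 4) ∧
    Tendsto (fun γ : ℝ =>
        (((1 + γ / z) / 2) * φ ((1 - 2 * γ ^ 2) * z + 2 * γ)
          + ((1 - γ / z) / 2) * φ ((1 - 2 * γ ^ 2) * z - 2 * γ)
          - φ z) / (2 * γ ^ 2))
      (𝓝[>] (0 : ℝ))
      (𝓝 ((1 / z - z) * deriv φ z + deriv (deriv φ) z)) := by
  refine ⟨?_, ?_, ?_⟩
  · exact (isBigO_zero _ _).congr_left fun γ =>
      (sub_eq_zero.mpr (stepExpect_increment hz.ne' γ)).symm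
  · exact (isBigO_const_mul_self (4 * z ^ 2 - 8) _ _).congr_left fun γ =>
      (sub_eq_of_eq_add' (stepExpect_sq_increment hz.ne' γ)).symm
  · have hφ_diff : ∀ᶠ w in 𝓝 z, DifferentiableAt ℝ φ w := by
      filter_upwards [Ioi_mem_nhds hz] with w hw
      exact (hφ w hw).differentiableAt (by norm_num)
    have hφ_C3 : ContDiffOn ℝ 3 φ (Set.Ioi 0) := fun w hw => (hφ w hw).contDiffWithinAt
    have hφ'_diff : DifferentiableAt ℝ (deriv φ) z :=
      ((hφ_C3.deriv_of_isOpen isOpen_Ioi (m := 2) (by norm_num)).differentiableOn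
        (by norm_num) z hz).differentiableAt (Ioi_mem_nhds hz)
    exact (tendsto_stepExpect_sub_div hz.ne'
      (by simpa only [smul_eq_mul] using isLittleO_sub_taylor_two hφ_diff hφ'_diff.hasDerivAt)).mono_left
      (nhdsGT_le_nhdsNE 0)
end
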